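/- Let p be a prime number, let F and K be finite fields with |F| = p and |K| = p², and let ι : F → K be a ring homomorphism. Then the image of SL₂(F) in SL₂(K) under the group homomorphism induced by ι has index p³ + p. -/

import Mathlib

/-!
`SL₂(ι)` is injective, so its range has `|SL₂(F)|` elements, and the index is
`|SL₂(K)| / |SL₂(F)|`. Since `det : GL₂ → units` is surjective with kernel `SL₂`, a field with
`q` elements has `|SL₂| = |GL₂| / (q - 1) = q (q² - 1)`, so the index is
`p² (p⁴ - 1) / (p (p² - 1)) = p³ + p`.
-/

open Matrix

namespace Matrix.SpecialLinearGroup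

variable {n : Type*} [Fintype n] [DecidableEq n]

theorem map_injective {R S : Type*} [CommRing R] [CommRing S] {f : R →+* S}
    (hf : Function.Injective f) : Function.Injective (map (n := n) f) := fun _ _ h ↦
  ext _ _ fun i j ↦ hf <| congrFun (congrFun (congrArg Subtype.val h) i) j

theorem card_mul_card_units (R : Type*) [CommRing R] [Nonempty n] :
    Nat.card (SpecialLinearGroup n R) * Nat.card Rˣ = Nat.card (GL n R) := by
  have hSL : Nat.card (SpecialLinearGroup n R) =
      Nat.card (GeneralLinearGroup.det (n := n) (R := R)).ker := by
    rw [← Nat.card_range_of_injective toGL_injective, range_toGL]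
    rfl
  have hunits : Nat.card Rˣ = (GeneralLinearGroup.det (n := n) (R := R)).ker.index := by
    rw [Subgroup.index_ker, MonoidHom.range_eq_top.mpr GeneralLinearGroup.det_surjective,
      Subgroup.card_top]
  rw [hSL, hunits, Subgroup.card_mul_index]

theorem card_fin_two_of_field (E : Type*) [Field E] [Fintype E] :
    Nat.card (SpecialLinearGroup (Fin 2) E) = Fintype.card E * (Fintype.card E ^ 2 - 1) := by
  have hq : Fintype.card E ^ 2 - Fintype.card E = Fintype.card E * (Fintype.card E - 1) := by
    rw [sq, Nat.mul_sub_one]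
  refine Nat.eq_of_mul_eq_mul_right (Nat.card_pos (α := Eˣ)) ?_
  rw [card_mul_card_units, card_GL_field, Fin.prod_univ_two, Nat.card_units,
    Nat.card_eq_fintype_card]
  simp only [Fin.val_zero, Fin.val_one, pow_zero, pow_one, hq]
  ring

end Matrix.SpecialLinearGroup

theorem index_range_SL2_inert_general (p : ℕ) (F K : Type*) [Field F] [Field K]
    [Fintype F] [Fintype K] (hF : Fintype.card F = p) (hK : Fintype.card K = p ^ 2)
    (ι : F →+* K) :
    (Matrix.SpecialLinearGroup.map (n := Fin 2) ι).range.index = p ^ 3 + p := by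
  have hrange : Nat.card (SpecialLinearGroup.map (n := Fin 2) ι).range =
      Nat.card (SpecialLinearGroup (Fin 2) F) :=
    (Nat.card_congr (MonoidHom.ofInjective
      (SpecialLinearGroup.map_injective ι.injective)).toEquiv).symm
  have hmul := (SpecialLinearGroup.map (n := Fin 2) ι).range.card_mul_index
  have hpos : 0 < Nat.card (SpecialLinearGroup (Fin 2) F) := Nat.card_pos
  rw [hrange, SpecialLinearGroup.card_fin_two_of_field, SpecialLinearGroup.card_fin_two_of_field,
    hF, hK] at hmul
  rw [SpecialLinearGroup.card_fin_two_of_field, hF] at hpos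
  have hfactor : (p ^ 2) ^ 2 - 1 = (p ^ 2 + 1) * (p ^ 2 - 1) := by
    simpa using Nat.sq_sub_sq (p ^ 2) 1
  refine Nat.eq_of_mul_eq_mul_left hpos (hmul.trans ?_)
  rw [hfactor]
  ring

/-- Let `p` be a prime, `F` and `K` finite fields with `|F| = p` and `|K| = p²`, and
`ι : F → K` a ring homomorphism.  Then the image of `SL₂(F)` in `SL₂(K)` under the group
homomorphism induced by `ι` has index `p³ + p`. -/
theorem index_range_SL2_inert (p : ℕ) (hp : p.Prime) (F K : Type*) [Field F] [Field K]
    [Fintype F] [Fintype K] (hF : Fintype.card F = p) (hK : Fintype.card K = p ^ 2)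
    (ι : F →+* K) :
    (Matrix.SpecialLinearGroup.map (n := Fin 2) ι).range.index = p ^ 3 + p :=
  index_range_SL2_inert_general p F K hF hK ι
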